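/- Let $a$, $b$, $c$ be positive integers not divisible by $3$, with $a$ and $b$ squarefree, $a \equiv 1 \pmod 8$, and $\gcd(ab, 2c) = 1$. Then the equation $9a x^2 - 3b y^2 + 16 c^2 z^2 = 1$ has a solution in $\mathbb{R}^3$ and a solution in $\mathbb{Z}_p^3$ for every prime $p$. -/

import Mathlib

/-!
Over `ℝ` take `x = 1 / (3 √a)`. Over `ℤ₂`, `9a ≡ 1 mod 8` gives `‖9a - 1‖ ≤ 1/8 < ‖2 · 9a‖²`,
so Hensel's lemma applied to `9a X² - 1` at `1` gives `x` with `9a x² = 1`. For odd `p ∤ c`,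
`4c` is a `p`-adic unit and `z = (4c)⁻¹` works. For odd `p ∣ c`, the hypotheses make `9a` and
`3b` units of `ℤ_p`; a binary quadratic form with nonzero coefficients over a finite field of odd
characteristic represents `1`, and since one coordinate of such a solution is nonzero, Hensel's
lemma lifts it to `ℤ_p`.
-/

open Polynomial

theorem FiniteField.exists_mul_sq_add_mul_sq_eq_one {K : Type*} [Field K] [Fintype K]
    (hK : ringChar K ≠ 2) {A B : K} (hA : A ≠ 0) (hB : B ≠ 0) :
    ∃ x y : K, A * x ^ 2 + B * y ^ 2 = 1 := by
  have hf : (C A * X ^ 2 - C 1 : K[X]).degree = 2 := by compute_degree!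
  have hg : (C B * X ^ 2 : K[X]).degree = 2 := degree_C_mul_X_pow 2 hB
  obtain ⟨x, y, hxy⟩ := exists_root_sum_quadratic hf hg (odd_card_of_char_ne_two hK)
  refine ⟨x, y, ?_⟩
  simp only [eval_sub, eval_mul, eval_pow, eval_C, eval_X] at hxy
  linear_combination hxy

namespace PadicInt

variable {p : ℕ} [Fact p.Prime]

theorem isUnit_iff_toZMod_ne_zero {z : ℤ_[p]} : IsUnit z ↔ toZMod z ≠ 0 := by
  rw [← IsLocalRing.notMem_maximalIdeal, ← ker_toZMod, RingHom.mem_ker]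

theorem isUnit_intCast_iff {k : ℤ} : IsUnit (k : ℤ_[p]) ↔ (k : ZMod p) ≠ 0 := by
  rw [isUnit_iff_toZMod_ne_zero, map_intCast]

theorem isUnit_intCast_of_isCoprime {k n : ℤ} (hkn : IsCoprime k n) (hn : (p : ℤ) ∣ n) :
    IsUnit (k : ℤ_[p]) := by
  have hn0 : (n : ZMod p) = 0 := (ZMod.intCast_zmod_eq_zero_iff_dvd n p).mpr hn
  simpa [isUnit_intCast_iff, hn0] using hkn.map (Int.castRingHom (ZMod p))

theorem norm_lt_one_iff_toZMod_eq_zero {z : ℤ_[p]} : ‖z‖ < 1 ↔ toZMod z = 0 := by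
  rw [← not_isUnit_iff, isUnit_iff_toZMod_ne_zero, not_not]

theorem exists_mul_sq_eq_of_norm_sub_lt {α β a : ℤ_[p]}
    (h : ‖α * a ^ 2 - β‖ < ‖2 * α * a‖ ^ 2) : ∃ x, α * x ^ 2 = β := by
  have hF (z : ℤ_[p]) : aeval z (C α * X ^ 2 - C β) = α * z ^ 2 - β := by simp
  have hF' : aeval a (derivative (C α * X ^ 2 - C β)) = 2 * α * a := by
    simp only [derivative_sub, derivative_C_mul_X_pow, derivative_C, sub_zero,
      coe_aeval_eq_eval, eval_C_mul, eval_pow, eval_X]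
    push_cast
    ring
  obtain ⟨x, hx, -⟩ := hensels_lemma (F := C α * X ^ 2 - C β) (a := a) (by rwa [hF, hF'])
  exact ⟨x, sub_eq_zero.mp (hF x ▸ hx)⟩

theorem exists_mul_sq_eq_of_toZMod (hp : p ≠ 2) {α β : ℤ_[p]} {x₀ : ZMod p}
    (hα : toZMod α ≠ 0) (hx₀ : x₀ ≠ 0) (h : toZMod α * x₀ ^ 2 = toZMod β) :
    ∃ x, α * x ^ 2 = β := by
  obtain ⟨a, rfl⟩ := ZMod.ringHom_surjective toZMod x₀
  refine exists_mul_sq_eq_of_norm_sub_lt (a := a) ?_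
  have h2 : (2 : ZMod p) ≠ 0 := Ring.two_ne_zero (by rwa [ZMod.ringChar_zmod_n])
  have h2αa : ‖2 * α * a‖ = 1 := isUnit_iff.mp <| isUnit_iff_toZMod_ne_zero.mpr <| by
    simpa [h2, hα, map_ofNat] using hx₀
  rw [h2αa, one_pow, norm_lt_one_iff_toZMod_eq_zero, map_sub, map_mul, map_pow, h, sub_self]

theorem exists_mul_sq_add_mul_sq_eq_one_of_toZMod (hp : p ≠ 2) {A B : ℤ_[p]}
    {x₀ y₀ : ZMod p} (hA : toZMod A ≠ 0) (hx₀ : x₀ ≠ 0)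
    (h : toZMod A * x₀ ^ 2 + toZMod B * y₀ ^ 2 = 1) :
    ∃ x y, A * x ^ 2 + B * y ^ 2 = 1 := by
  obtain ⟨b, rfl⟩ := ZMod.ringHom_surjective toZMod y₀
  obtain ⟨a, ha⟩ := exists_mul_sq_eq_of_toZMod hp hA hx₀ (β := 1 - B * b ^ 2)
    (by rw [map_sub, map_one, map_mul, map_pow]; linear_combination h)
  exact ⟨a, b, by linear_combination ha⟩

theorem exists_mul_sq_add_mul_sq_eq_one (hp : p ≠ 2) {A B : ℤ_[p]} (hA : IsUnit A)
    (hB : IsUnit B) : ∃ x y, A * x ^ 2 + B * y ^ 2 = 1 := by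
  rw [isUnit_iff_toZMod_ne_zero] at hA hB
  obtain ⟨x₀, y₀, h⟩ :=
    FiniteField.exists_mul_sq_add_mul_sq_eq_one (by rwa [ZMod.ringChar_zmod_n]) hA hB
  by_cases hx₀ : x₀ = 0
  · have hy₀ : y₀ ≠ 0 := by rintro rfl; simp [hx₀] at h
    obtain ⟨y, x, hyx⟩ := exists_mul_sq_add_mul_sq_eq_one_of_toZMod hp hB hy₀ (B := A)
      (y₀ := x₀) (by linear_combination h)
    exact ⟨x, y, by linear_combination hyx⟩
  · exact exists_mul_sq_add_mul_sq_eq_one_of_toZMod hp hA hx₀ h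

theorem exists_intCast_mul_sq_eq_one_of_modEq {n : ℤ} (hn : n ≡ 1 [ZMOD 8]) :
    ∃ x : ℤ_[2], n * x ^ 2 = 1 := by
  refine exists_mul_sq_eq_of_norm_sub_lt (a := 1) ?_
  have h8 : ‖((n - 1 : ℤ) : ℤ_[2])‖ ≤ 2 ^ (-3 : ℤ) := norm_int_le_pow_iff_dvd.mpr hn.symm.dvd
  have hn2 : ‖(n : ℤ_[2])‖ = 1 := by
    refine le_antisymm (norm_le_one _) (not_lt.mp fun hlt => ?_)
    have := (norm_int_lt_one_iff_dvd n).mp hlt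
    unfold Int.ModEq at hn
    omega
  have h2 : ‖(2 : ℤ_[2])‖ = 2⁻¹ := by exact_mod_cast norm_p (p := 2)
  push_cast at h8
  rw [mul_one, one_pow, mul_one, norm_mul, h2, hn2]
  calc ‖(n : ℤ_[2]) - 1‖ ≤ 2 ^ (-3 : ℤ) := h8
    _ < (2⁻¹ * 1) ^ 2 := by norm_num

end PadicInt

open PadicInt in
theorem stmt10_general (a b c : ℤ) (ha : 0 < a)
    (hc3 : ¬ (3 : ℤ) ∣ c)
    (ha8 : a ≡ 1 [ZMOD 8]) (hgcd : Int.gcd (a * b) (2 * c) = 1) :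
    (∃ x y z : ℝ,
      9 * (a : ℝ) * x ^ 2 - 3 * (b : ℝ) * y ^ 2 + 16 * (c : ℝ) ^ 2 * z ^ 2 = 1) ∧
    (∀ (p : ℕ) [Fact p.Prime], ∃ x y z : ℤ_[p],
      9 * (a : ℤ_[p]) * x ^ 2 - 3 * (b : ℤ_[p]) * y ^ 2 + 16 * (c : ℤ_[p]) ^ 2 * z ^ 2 = 1) := by
  refine ⟨⟨(3 * √a)⁻¹, 0, 0, ?_⟩, fun p _ => ?_⟩
  · have ha' : (0 : ℝ) < a := by exact_mod_cast ha
    rw [inv_pow, mul_pow, Real.sq_sqrt ha'.le]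
    field_simp
    ring
  rcases eq_or_ne p 2 with rfl | hp2
  · obtain ⟨x, hx⟩ := exists_intCast_mul_sq_eq_one_of_modEq (n := 9 * a)
      (((Int.ModEq.refl 9).mul ha8).trans (by decide))
    exact ⟨x, 0, 0, by push_cast at hx; linear_combination hx⟩
  by_cases hpc : (p : ℤ) ∣ c
  · have h3 : IsCoprime 3 c := Int.prime_three.coprime_iff_not_dvd.mpr hc3
    have hab : IsCoprime (a * b) c := (Int.isCoprime_iff_gcd_eq_one.mpr hgcd).of_mul_right_right
    obtain ⟨x, y, hxy⟩ := exists_mul_sq_add_mul_sq_eq_one hp2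
      (isUnit_intCast_of_isCoprime ((h3.mul_left h3).mul_left hab.of_mul_left_left) hpc)
      (isUnit_intCast_of_isCoprime (h3.mul_left hab.of_mul_left_right).neg_left hpc)
    exact ⟨x, y, 0, by push_cast at hxy; linear_combination hxy⟩
  · obtain ⟨u, hu⟩ : IsUnit ((4 * c : ℤ) : ℤ_[p]) := by
      have h2 : (2 : ZMod p) ≠ 0 := Ring.two_ne_zero (by rwa [ZMod.ringChar_zmod_n])
      have hc : (c : ZMod p) ≠ 0 := by rwa [Ne, ZMod.intCast_zmod_eq_zero_iff_dvd]
      rw [isUnit_intCast_iff, show ((4 * c : ℤ) : ZMod p) = 2 * 2 * c by push_cast; ring]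
      exact mul_ne_zero (mul_ne_zero h2 h2) hc
    have h4c : (4 * c : ℤ_[p]) * ↑u⁻¹ = 1 := by exact_mod_cast hu ▸ u.mul_inv
    exact ⟨0, 0, ↑u⁻¹, by linear_combination (4 * c * (↑u⁻¹ : ℤ_[p]) + 1) * h4c⟩

/-- Let `a`, `b`, `c` be positive integers not divisible by `3`, with `a`, `b`
squarefree, `a ≡ 1 (mod 8)` and `gcd(ab, 2c) = 1`. Then `9a x² - 3b y² + 16c² z² = 1`
is soluble over `ℝ` and over `ℤ_p` for every prime `p`. -/
theorem stmt10 (a b c : ℤ) (ha : 0 < a) (hb : 0 < b) (hc : 0 < c)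
    (ha3 : ¬ (3 : ℤ) ∣ a) (hb3 : ¬ (3 : ℤ) ∣ b) (hc3 : ¬ (3 : ℤ) ∣ c)
    (hasf : Squarefree a) (hbsf : Squarefree b)
    (ha8 : a ≡ 1 [ZMOD 8]) (hgcd : Int.gcd (a * b) (2 * c) = 1) :
    (∃ x y z : ℝ,
      9 * (a : ℝ) * x ^ 2 - 3 * (b : ℝ) * y ^ 2 + 16 * (c : ℝ) ^ 2 * z ^ 2 = 1) ∧
    (∀ (p : ℕ) [Fact p.Prime], ∃ x y z : ℤ_[p],
      9 * (a : ℤ_[p]) * x ^ 2 - 3 * (b : ℤ_[p]) * y ^ 2 + 16 * (c : ℤ_[p]) ^ 2 * z ^ 2 = 1) :=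
  stmt10_general a b c ha hc3 ha8 hgcd
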